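/- arXiv:quant-ph/9811074 — 5 statements merged into one kernel-verified Lean document; each statement's English description precedes it below -/
import Mathlib

section
/- Probability theorem: if A satisfies 0 ≤ A ≤ 1, ⟨φ₁,Aφ₁⟩ = 1 and ⟨φ₂,Aφ₂⟩ = 0 (A discriminates φ₁ against φ₂), then for the superposition φ = c₁φ₁ + c₂φ₂ with |c₁|² + |c₂|² = 1 one has ⟨φ, A φ⟩ = |c₁|². -/
/-!
A positive operator kills every vector on which its quadratic form vanishes. Applied to `A` at
`φ₂` and to `1 - A` at `φ₁`, this makes `φ₂` and `φ₁` eigenvectors of `A` for the eigenvalues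
`0` and `1`, after which `⟪φ, A φ⟫ = ⟪φ, c₁ φ₁⟫ = |c₁|²` by orthonormality.
-/

open scoped InnerProductSpace

namespace ContinuousLinearMap

variable {H : Type*} [NormedAddCommGroup H] [InnerProductSpace ℂ H] [CompleteSpace H]

/-- Writing `T = S† S`, the quantity `⟪x, T x⟫` is `‖S x‖²`, so it vanishes only if `S x = 0`. -/
theorem IsPositive.apply_eq_zero_of_inner_eq_zero {T : H →L[ℂ] H} (hT : T.IsPositive) {x : H}
    (hx : ⟪x, T x⟫_ℂ = 0) : T x = 0 := by
  obtain ⟨S, rfl⟩ := CStarAlgebra.nonneg_iff_eq_star_mul_self.mp ((nonneg_iff_isPositive T).mpr hT)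
  have hSx : S x = 0 := by
    rwa [star_eq_adjoint, mul_apply_eq_comp, adjoint_inner_right, inner_self_eq_zero] at hx
  rw [mul_apply_eq_comp, hSx, map_zero]

theorem apply_eq_self_of_inner_eq_inner_self {A : H →L[ℂ] H} (hA1 : (1 - A).IsPositive) {x : H}
    (hx : ⟪x, A x⟫_ℂ = ⟪x, x⟫_ℂ) : A x = x := by
  have h := hA1.apply_eq_zero_of_inner_eq_zero (x := x) (by simp [hx])
  rw [sub_apply, one_apply_eq_self, sub_eq_zero] at h
  exact h.symm

end ContinuousLinearMap

theorem stmt4_general {H : Type*} [NormedAddCommGroup H] [InnerProductSpace ℂ H] [CompleteSpace H]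
    (φ₁ φ₂ : H) (hφ₁ : ‖φ₁‖ = 1) (horth : ⟪φ₁, φ₂⟫_ℂ = 0)
    (c₁ c₂ : ℂ)
    (A : H →L[ℂ] H) (hA : A.IsPositive) (hA1 : (1 - A).IsPositive)
    (h1 : ⟪φ₁, A φ₁⟫_ℂ = 1) (h2 : ⟪φ₂, A φ₂⟫_ℂ = 0) :
    ⟪c₁ • φ₁ + c₂ • φ₂, A (c₁ • φ₁ + c₂ • φ₂)⟫_ℂ = (‖c₁‖ ^ 2 : ℂ) := by
  have hφ₁φ₁ : ⟪φ₁, φ₁⟫_ℂ = 1 := by simp [inner_self_eq_norm_sq_to_K, hφ₁]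
  have hφ₂φ₁ : ⟪φ₂, φ₁⟫_ℂ = 0 := by rw [← inner_conj_symm, horth, map_zero]
  have hAφ₁ : A φ₁ = φ₁ := A.apply_eq_self_of_inner_eq_inner_self hA1 (h1.trans hφ₁φ₁.symm)
  have hAφ₂ : A φ₂ = 0 := hA.apply_eq_zero_of_inner_eq_zero h2
  calc ⟪c₁ • φ₁ + c₂ • φ₂, A (c₁ • φ₁ + c₂ • φ₂)⟫_ℂ
      = (starRingEnd ℂ) c₁ * c₁ * ⟪φ₁, φ₁⟫_ℂ + (starRingEnd ℂ) c₂ * c₁ * ⟪φ₂, φ₁⟫_ℂ := by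
        simp only [map_add, map_smul, hAφ₁, hAφ₂, smul_zero, add_zero, inner_add_left,
          inner_smul_left, inner_smul_right]
        ring
    _ = (‖c₁‖ ^ 2 : ℂ) := by rw [hφ₁φ₁, hφ₂φ₁, Complex.conj_mul']; ring

theorem stmt4 {H : Type*} [NormedAddCommGroup H] [InnerProductSpace ℂ H] [CompleteSpace H]
    (φ₁ φ₂ : H) (hφ₁ : ‖φ₁‖ = 1) (hφ₂ : ‖φ₂‖ = 1) (horth : ⟪φ₁, φ₂⟫_ℂ = 0)
    (c₁ c₂ : ℂ) (hc : ‖c₁‖ ^ 2 + ‖c₂‖ ^ 2 = 1)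
    (A : H →L[ℂ] H) (hA : A.IsPositive) (hA1 : (1 - A).IsPositive)
    (h1 : ⟪φ₁, A φ₁⟫_ℂ = 1) (h2 : ⟪φ₂, A φ₂⟫_ℂ = 0) :
    ⟪c₁ • φ₁ + c₂ • φ₂, A (c₁ • φ₁ + c₂ • φ₂)⟫_ℂ = (‖c₁‖ ^ 2 : ℂ) :=
  stmt4_general φ₁ φ₂ hφ₁ horth c₁ c₂ A hA hA1 h1 h2
end

section
/- Objectivity theorem (two-channel pure-state version): let Φ = c₁(φ₁⊗ψ₁) + c₂(φ₂⊗ψ₂) with (φᵢ), (ψᵢ) orthonormal pairs and |c₁|²+|c₂|²=1, and let A, B be observables with 0 ≤ A ≤ 1, 0 ≤ B ≤ 1, ⟨φᵢ,Aφᵢ⟩ = δ_{i1}, ⟨ψᵢ,Bψᵢ⟩ = δ_{i1}. Then ⟨Φ, (A ⊗ (1−B)) Φ⟩ = 0 and ⟨Φ, ((1−A) ⊗ B) Φ⟩ = 0, i.e. the two readings agree with probability one. -/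
/-!
A positive operator with vanishing expectation in a vector annihilates that vector, so
`A φ₂ = 0` and `B ψ₂ = 0`. Hence every off-diagonal matrix element of `A ⊗ (1 − B)` and
`(1 − A) ⊗ B` between the `φᵢ ⊗ ψᵢ` vanishes, and so do the diagonal ones
`⟪φᵢ, A φᵢ⟫ (‖ψᵢ‖² − ⟪ψᵢ, B ψᵢ⟫)` and `(‖φᵢ‖² − ⟪φᵢ, A φᵢ⟫) ⟪ψᵢ, B ψᵢ⟫`, because both readings
equal `δᵢ₁` and `‖φ₁‖ = ‖ψ₁‖ = 1`.
-/

open scoped InnerProductSpace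

theorem ContinuousLinearMap.IsPositive.apply_eq_zero_of_inner_self_eq_zero
    {𝕜 E : Type*} [RCLike 𝕜] [NormedAddCommGroup E] [InnerProductSpace 𝕜 E]
    {T : E →L[𝕜] E} (hT : T.IsPositive) {y : E} (hy : ⟪y, T y⟫_𝕜 = 0) : T y = 0 := by
  -- Cauchy–Schwarz for the semi-inner product `⟪a, T b⟫`, applied to `T y` and `y`.
  let core : PreInnerProductSpace.Core 𝕜 E :=
    { inner a b := ⟪a, T b⟫_𝕜
      conj_inner_symm a b := by rw [inner_conj_symm]; exact hT.inner_left_eq_inner_right a b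
      re_inner_nonneg := hT.re_inner_nonneg_right
      add_left a b c := inner_add_left a b (T c)
      smul_left a b r := inner_smul_left a (T b) r }
  have cauchy_schwarz := InnerProductSpace.Core.inner_mul_inner_self_le (c := core) (T y) y
  change ‖⟪T y, T y⟫_𝕜‖ * ‖⟪y, T (T y)⟫_𝕜‖ ≤ RCLike.re ⟪T y, T (T y)⟫_𝕜 * RCLike.re ⟪y, T y⟫_𝕜
    at cauchy_schwarz
  rw [hy, map_zero, mul_zero, ← hT.inner_left_eq_inner_right y (T y), ← sq] at cauchy_schwarz
  exact inner_self_eq_zero.mp (norm_eq_zero.mp (sq_nonpos_iff _ |>.mp cauchy_schwarz))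

theorem inner_smul_add_smul_apply_eq_zero {𝕜 E : Type*} [RCLike 𝕜] [NormedAddCommGroup E]
    [InnerProductSpace 𝕜 E] (T : E →L[𝕜] E) {u₁ u₂ : E}
    (h₁₁ : ⟪u₁, T u₁⟫_𝕜 = 0) (h₁₂ : ⟪u₁, T u₂⟫_𝕜 = 0)
    (h₂₁ : ⟪u₂, T u₁⟫_𝕜 = 0) (h₂₂ : ⟪u₂, T u₂⟫_𝕜 = 0) (c₁ c₂ : 𝕜) :
    ⟪c₁ • u₁ + c₂ • u₂, T (c₁ • u₁ + c₂ • u₂)⟫_𝕜 = 0 := by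
  simp only [map_add, map_smul, inner_add_left, inner_add_right, inner_smul_left,
    inner_smul_right, h₁₁, h₁₂, h₂₁, h₂₂, mul_zero, add_zero]

/-- The Hilbert tensor product is modelled by a space `K` with elementary tensors `tp`;
`T₁` and `T₂` stand for `A ⊗ (1 − B)` and `(1 − A) ⊗ B`, given by their matrix elements on
elementary tensors. -/
theorem stmt10_general {H₁ H₂ K : Type*}
    [NormedAddCommGroup H₁] [InnerProductSpace ℂ H₁]
    [NormedAddCommGroup H₂] [InnerProductSpace ℂ H₂]
    [NormedAddCommGroup K] [InnerProductSpace ℂ K]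
    (φ₁ φ₂ : H₁) (hφ₁ : ‖φ₁‖ = 1)
    (ψ₁ ψ₂ : H₂) (hψ₁ : ‖ψ₁‖ = 1)
    (c₁ c₂ : ℂ)
    (A : H₁ →L[ℂ] H₁) (hA : A.IsPositive)
    (B : H₂ →L[ℂ] H₂) (hB : B.IsPositive)
    (hAφ₁ : ⟪φ₁, A φ₁⟫_ℂ = 1) (hAφ₂ : ⟪φ₂, A φ₂⟫_ℂ = 0)
    (hBψ₁ : ⟪ψ₁, B ψ₁⟫_ℂ = 1) (hBψ₂ : ⟪ψ₂, B ψ₂⟫_ℂ = 0)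
    (tp : H₁ → H₂ → K)
    (T₁ T₂ : K →L[ℂ] K)
    (hT₁ : ∀ (x x' : H₁) (y y' : H₂),
      ⟪tp x y, T₁ (tp x' y')⟫_ℂ = ⟪x, A x'⟫_ℂ * (⟪y, y'⟫_ℂ - ⟪y, B y'⟫_ℂ))
    (hT₂ : ∀ (x x' : H₁) (y y' : H₂),
      ⟪tp x y, T₂ (tp x' y')⟫_ℂ = (⟪x, x'⟫_ℂ - ⟪x, A x'⟫_ℂ) * ⟪y, B y'⟫_ℂ)
    (Φ : K) (hΦ : Φ = c₁ • tp φ₁ ψ₁ + c₂ • tp φ₂ ψ₂) :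
    ⟪Φ, T₁ Φ⟫_ℂ = 0 ∧ ⟪Φ, T₂ Φ⟫_ℂ = 0 := by
  have hAφ₂_eq : A φ₂ = 0 := hA.apply_eq_zero_of_inner_self_eq_zero hAφ₂
  have hBψ₂_eq : B ψ₂ = 0 := hB.apply_eq_zero_of_inner_self_eq_zero hBψ₂
  have hAφ₂₁ : ⟪φ₂, A φ₁⟫_ℂ = 0 := by
    rw [← hA.inner_left_eq_inner_right, hAφ₂_eq, inner_zero_left]
  have hBψ₂₁ : ⟪ψ₂, B ψ₁⟫_ℂ = 0 := by
    rw [← hB.inner_left_eq_inner_right, hBψ₂_eq, inner_zero_left]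
  subst hΦ
  constructor <;> apply inner_smul_add_smul_apply_eq_zero <;>
    simp [hT₁, hT₂, hAφ₁, hAφ₂_eq, hAφ₂₁, hBψ₁, hBψ₂_eq, hBψ₂₁, hφ₁, hψ₁]

/-- Theorem 3 (Objectivity) of the paper in the two-channel pure-state model.
The Hilbert tensor product is represented by a Hilbert space `K` with elementary
tensors `tp : H₁ → H₂ → K`; the operators `A ⊗ (1−B)` and `(1−A) ⊗ B` are
represented by `T₁`, `T₂ : K →L[ℂ] K`, characterized by their matrix elements on
elementary tensors. The two discriminating readings agree with probability one. -/
theorem stmt10 {H₁ H₂ K : Type*}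
    [NormedAddCommGroup H₁] [InnerProductSpace ℂ H₁] [CompleteSpace H₁]
    [NormedAddCommGroup H₂] [InnerProductSpace ℂ H₂] [CompleteSpace H₂]
    [NormedAddCommGroup K] [InnerProductSpace ℂ K] [CompleteSpace K]
    (φ₁ φ₂ : H₁) (hφ₁ : ‖φ₁‖ = 1) (hφ₂ : ‖φ₂‖ = 1) (hφ : ⟪φ₁, φ₂⟫_ℂ = 0)
    (ψ₁ ψ₂ : H₂) (hψ₁ : ‖ψ₁‖ = 1) (hψ₂ : ‖ψ₂‖ = 1) (hψ : ⟪ψ₁, ψ₂⟫_ℂ = 0)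
    (c₁ c₂ : ℂ) (hc : ‖c₁‖ ^ 2 + ‖c₂‖ ^ 2 = 1)
    (A : H₁ →L[ℂ] H₁) (hA : A.IsPositive) (hA1 : (1 - A).IsPositive)
    (B : H₂ →L[ℂ] H₂) (hB : B.IsPositive) (hB1 : (1 - B).IsPositive)
    (hAφ₁ : ⟪φ₁, A φ₁⟫_ℂ = 1) (hAφ₂ : ⟪φ₂, A φ₂⟫_ℂ = 0)
    (hBψ₁ : ⟪ψ₁, B ψ₁⟫_ℂ = 1) (hBψ₂ : ⟪ψ₂, B ψ₂⟫_ℂ = 0)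
    (tp : H₁ → H₂ → K)
    (T₁ T₂ : K →L[ℂ] K)
    (hT₁ : ∀ (x x' : H₁) (y y' : H₂),
      ⟪tp x y, T₁ (tp x' y')⟫_ℂ = ⟪x, A x'⟫_ℂ * (⟪y, y'⟫_ℂ - ⟪y, B y'⟫_ℂ))
    (hT₂ : ∀ (x x' : H₁) (y y' : H₂),
      ⟪tp x y, T₂ (tp x' y')⟫_ℂ = (⟪x, x'⟫_ℂ - ⟪x, A x'⟫_ℂ) * ⟪y, B y'⟫_ℂ)
    (Φ : K) (hΦ : Φ = c₁ • tp φ₁ ψ₁ + c₂ • tp φ₂ ψ₂) :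
    ⟪Φ, T₁ Φ⟫_ℂ = 0 ∧ ⟪Φ, T₂ Φ⟫_ℂ = 0 :=
  stmt10_general φ₁ φ₂ hφ₁ ψ₁ ψ₂ hψ₁ c₁ c₂ A hA B hB hAφ₁ hAφ₂ hBψ₁ hBψ₂ tp T₁ T₂ hT₁ hT₂ Φ hΦ
end

section
/- Equivalent form of objectivity: under the hypotheses of the two-channel objectivity theorem, ⟨Φ, (A ⊗ B) Φ⟩ = ⟨Φ, (A ⊗ 1) Φ⟩ = ⟨Φ, (1 ⊗ B) Φ⟩ = |c₁|². -/
open scoped InnerProductSpace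

/-!
Since `B ≥ 0` and `⟪ψ₂, B ψ₂⟫ = 0`, Cauchy–Schwarz for the form `⟪x, B y⟫` forces `B ψ₂ = 0`.
Hence each of `A ⊗ B`, `A ⊗ 1`, `1 ⊗ B` has matrix `diag(1, 0)` on `φ₁ ⊗ ψ₁, φ₂ ⊗ ψ₂`: the
off-diagonal entries vanish through `B ψ₂ = 0` or through orthogonality of the `φᵢ` or the `ψᵢ`.
The expectation in `Φ = c₁ φ₁ ⊗ ψ₁ + c₂ φ₂ ⊗ ψ₂` is therefore `|c₁|²`.
-/

section

variable {𝕜 E : Type*} [RCLike 𝕜] [NormedAddCommGroup E] [InnerProductSpace 𝕜 E]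

theorem LinearMap.IsPositive.map_eq_zero_of_inner_map_self_eq_zero {T : E →ₗ[𝕜] E}
    (hT : T.IsPositive) {y : E} (hy : ⟪y, T y⟫_𝕜 = 0) : T y = 0 := by
  let form : PreInnerProductSpace.Core 𝕜 E :=
    { inner := fun a b => ⟪a, T b⟫_𝕜
      conj_inner_symm := fun a b => (inner_conj_symm _ _).trans (hT.isSymmetric a b)
      re_inner_nonneg := hT.re_inner_nonneg_right
      add_left := fun a b z => inner_add_left a b (T z)
      smul_left := fun a b r => inner_smul_left a (T b) r }
  have cauchy_schwarz := @InnerProductSpace.Core.inner_mul_inner_self_le 𝕜 E _ _ _ form (T y) y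
  change ‖⟪T y, T y⟫_𝕜‖ * ‖⟪y, T (T y)⟫_𝕜‖ ≤ _ * RCLike.re ⟪y, T y⟫_𝕜 at cauchy_schwarz
  rw [hy, map_zero, mul_zero, ← hT.isSymmetric y (T y)] at cauchy_schwarz
  have : ‖⟪T y, T y⟫_𝕜‖ = 0 := by nlinarith [norm_nonneg ⟪T y, T y⟫_𝕜]
  simpa using this

theorem inner_smul_add_smul_map_eq_norm_sq {T : E →ₗ[𝕜] E} {u v : E}
    (huu : ⟪u, T u⟫_𝕜 = 1) (huv : ⟪u, T v⟫_𝕜 = 0) (hvu : ⟪v, T u⟫_𝕜 = 0)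
    (hvv : ⟪v, T v⟫_𝕜 = 0) (a b : 𝕜) :
    ⟪a • u + b • v, T (a • u + b • v)⟫_𝕜 = (‖a‖ ^ 2 : 𝕜) := by
  simp only [map_add, map_smul, inner_add_left, inner_add_right, inner_smul_left,
    inner_smul_right, huu, huv, hvu, hvv, mul_zero, mul_one, add_zero, RCLike.mul_conj]

end

theorem stmt11_general {H₁ H₂ K : Type*}
    [NormedAddCommGroup H₁] [InnerProductSpace ℂ H₁]
    [NormedAddCommGroup H₂] [InnerProductSpace ℂ H₂]
    [NormedAddCommGroup K] [InnerProductSpace ℂ K]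
    (φ₁ φ₂ : H₁) (hφ₁ : ‖φ₁‖ = 1) (hφ : ⟪φ₁, φ₂⟫_ℂ = 0)
    (ψ₁ ψ₂ : H₂) (hψ₁ : ‖ψ₁‖ = 1) (hψ : ⟪ψ₁, ψ₂⟫_ℂ = 0)
    (c₁ c₂ : ℂ)
    (A : H₁ →L[ℂ] H₁)
    (B : H₂ →L[ℂ] H₂) (hB : B.IsPositive)
    (hAφ₁ : ⟪φ₁, A φ₁⟫_ℂ = 1) (hAφ₂ : ⟪φ₂, A φ₂⟫_ℂ = 0)
    (hBψ₁ : ⟪ψ₁, B ψ₁⟫_ℂ = 1) (hBψ₂ : ⟪ψ₂, B ψ₂⟫_ℂ = 0)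
    (tp : H₁ → H₂ → K)
    (TAB TA1 T1B : K →L[ℂ] K)
    (hTAB : ∀ (x x' : H₁) (y y' : H₂),
      ⟪tp x y, TAB (tp x' y')⟫_ℂ = ⟪x, A x'⟫_ℂ * ⟪y, B y'⟫_ℂ)
    (hTA1 : ∀ (x x' : H₁) (y y' : H₂),
      ⟪tp x y, TA1 (tp x' y')⟫_ℂ = ⟪x, A x'⟫_ℂ * ⟪y, y'⟫_ℂ)
    (hT1B : ∀ (x x' : H₁) (y y' : H₂),
      ⟪tp x y, T1B (tp x' y')⟫_ℂ = ⟪x, x'⟫_ℂ * ⟪y, B y'⟫_ℂ)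
    (Φ : K) (hΦ : Φ = c₁ • tp φ₁ ψ₁ + c₂ • tp φ₂ ψ₂) :
    ⟪Φ, TAB Φ⟫_ℂ = (‖c₁‖ ^ 2 : ℂ) ∧ ⟪Φ, TA1 Φ⟫_ℂ = (‖c₁‖ ^ 2 : ℂ) ∧
      ⟪Φ, T1B Φ⟫_ℂ = (‖c₁‖ ^ 2 : ℂ) := by
  have hBψ₂_eq_zero : B ψ₂ = 0 := hB.toLinearMap.map_eq_zero_of_inner_map_self_eq_zero hBψ₂
  have hψ₂Bψ₁ : ⟪ψ₂, B ψ₁⟫_ℂ = 0 := by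
    rw [← hB.inner_left_eq_inner_right, hBψ₂_eq_zero, inner_zero_left]
  have hφ₁φ₁ : ⟪φ₁, φ₁⟫_ℂ = 1 := by simp [inner_self_eq_norm_sq_to_K, hφ₁]
  have hψ₁ψ₁ : ⟪ψ₁, ψ₁⟫_ℂ = 1 := by simp [inner_self_eq_norm_sq_to_K, hψ₁]
  subst hΦ
  refine ⟨?_, ?_, ?_⟩ <;> refine inner_smul_add_smul_map_eq_norm_sq ?_ ?_ ?_ ?_ c₁ c₂
  all_goals simp only [ContinuousLinearMap.coe_coe, hTAB, hTA1, hT1B]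
  all_goals simp only [hAφ₁, hAφ₂, hBψ₁, hBψ₂_eq_zero, hψ₂Bψ₁, hφ, hψ, hφ₁φ₁, hψ₁ψ₁,
    inner_zero_right, inner_eq_zero_symm.mp hφ, inner_eq_zero_symm.mp hψ, mul_zero, zero_mul,
    mul_one]

/-- Eq. (93) of the paper: equivalent form of the objectivity theorem in the
two-channel pure-state model. `TAB`, `TA1`, `T1B` represent `A ⊗ B`, `A ⊗ 1`,
`1 ⊗ B` on the Hilbert tensor product `K`, characterized by their matrix
elements on elementary tensors `tp x y`. -/
theorem stmt11 {H₁ H₂ K : Type*}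
    [NormedAddCommGroup H₁] [InnerProductSpace ℂ H₁] [CompleteSpace H₁]
    [NormedAddCommGroup H₂] [InnerProductSpace ℂ H₂] [CompleteSpace H₂]
    [NormedAddCommGroup K] [InnerProductSpace ℂ K] [CompleteSpace K]
    (φ₁ φ₂ : H₁) (hφ₁ : ‖φ₁‖ = 1) (hφ₂ : ‖φ₂‖ = 1) (hφ : ⟪φ₁, φ₂⟫_ℂ = 0)
    (ψ₁ ψ₂ : H₂) (hψ₁ : ‖ψ₁‖ = 1) (hψ₂ : ‖ψ₂‖ = 1) (hψ : ⟪ψ₁, ψ₂⟫_ℂ = 0)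
    (c₁ c₂ : ℂ) (hc : ‖c₁‖ ^ 2 + ‖c₂‖ ^ 2 = 1)
    (A : H₁ →L[ℂ] H₁) (hA : A.IsPositive) (hA1 : (1 - A).IsPositive)
    (B : H₂ →L[ℂ] H₂) (hB : B.IsPositive) (hB1 : (1 - B).IsPositive)
    (hAφ₁ : ⟪φ₁, A φ₁⟫_ℂ = 1) (hAφ₂ : ⟪φ₂, A φ₂⟫_ℂ = 0)
    (hBψ₁ : ⟪ψ₁, B ψ₁⟫_ℂ = 1) (hBψ₂ : ⟪ψ₂, B ψ₂⟫_ℂ = 0)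
    (tp : H₁ → H₂ → K)
    (TAB TA1 T1B : K →L[ℂ] K)
    (hTAB : ∀ (x x' : H₁) (y y' : H₂),
      ⟪tp x y, TAB (tp x' y')⟫_ℂ = ⟪x, A x'⟫_ℂ * ⟪y, B y'⟫_ℂ)
    (hTA1 : ∀ (x x' : H₁) (y y' : H₂),
      ⟪tp x y, TA1 (tp x' y')⟫_ℂ = ⟪x, A x'⟫_ℂ * ⟪y, y'⟫_ℂ)
    (hT1B : ∀ (x x' : H₁) (y y' : H₂),
      ⟪tp x y, T1B (tp x' y')⟫_ℂ = ⟪x, x'⟫_ℂ * ⟪y, B y'⟫_ℂ)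
    (Φ : K) (hΦ : Φ = c₁ • tp φ₁ ψ₁ + c₂ • tp φ₂ ψ₂) :
    ⟪Φ, TAB Φ⟫_ℂ = (‖c₁‖ ^ 2 : ℂ) ∧ ⟪Φ, TA1 Φ⟫_ℂ = (‖c₁‖ ^ 2 : ℂ) ∧
      ⟪Φ, T1B Φ⟫_ℂ = (‖c₁‖ ^ 2 : ℂ) :=
  stmt11_general φ₁ φ₂ hφ₁ hφ ψ₁ ψ₂ hψ₁ hψ c₁ c₂ A B hB hAφ₁ hAφ₂ hBψ₁ hBψ₂ tp TAB TA1 T1B hTAB hTA1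
    hT1B Φ hΦ
end

section
/- Insensitivity to interference of an extreme-valued observable: if 0 ≤ A ≤ 1 and ⟨φ₁, A φ₁⟩ ∈ {0, 1} for a unit vector φ₁, then for φ₂ orthonormal to φ₁ and any c₁ c₂ with |c₁|²+|c₂|²=1, ⟨c₁φ₁+c₂φ₂, A (c₁φ₁+c₂φ₂)⟩ = |c₁|²⟨φ₁,Aφ₁⟩ + |c₂|²⟨φ₂,Aφ₂⟩. -/
/-!
If `0 ≤ T` then `⟪x, T x⟫ = ‖√T x‖²`, so `⟪x, T x⟫ = 0` forces `T x = 0`. Applied to `A` and to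
`1 - A`, a sharp value `0` or `1` of `⟪φ₁, A φ₁⟫` makes `φ₁` an eigenvector of `A` (eigenvalue `0`
or `1`). Since `A` is symmetric and `φ₂ ⟂ φ₁`, the interference terms `⟪φ₂, A φ₁⟫` and
`⟪φ₁, A φ₂⟫` then vanish.
-/

open scoped InnerProductSpace

namespace ContinuousLinearMap

variable {H : Type*} [NormedAddCommGroup H] [InnerProductSpace ℂ H] [CompleteSpace H]

theorem apply_eq_self_of_inner_eq_one {T : H →L[ℂ] H} (hT : (1 - T).IsPositive) {x : H}
    (hx₁ : ‖x‖ = 1) (hx : ⟪x, T x⟫_ℂ = 1) : T x = x := by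
  have h : (1 - T) x = 0 := hT.apply_eq_zero_of_inner_eq_zero <| by
    rw [sub_apply, one_apply_eq_self, inner_sub_right, hx, inner_self_eq_norm_sq_to_K, hx₁]
    norm_num
  exact (sub_eq_zero.mp h).symm

end ContinuousLinearMap

theorem LinearMap.IsSymmetric.inner_smul_add_smul_map_smul_add_smul {𝕜 E : Type*} [RCLike 𝕜]
    [NormedAddCommGroup E] [InnerProductSpace 𝕜 E] {T : E →ₗ[𝕜] E} (hT : T.IsSymmetric)
    {x y : E} (hxy : ⟪y, T x⟫_𝕜 = 0) (a b : 𝕜) :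
    ⟪a • x + b • y, T (a • x + b • y)⟫_𝕜
      = (‖a‖ ^ 2 : 𝕜) * ⟪x, T x⟫_𝕜 + (‖b‖ ^ 2 : 𝕜) * ⟪y, T y⟫_𝕜 := by
  have hyx : ⟪x, T y⟫_𝕜 = 0 := by rw [← hT, ← inner_conj_symm, hxy, map_zero]
  simp only [map_add, map_smul, inner_add_left, inner_add_right, inner_smul_left,
    inner_smul_right, hxy, hyx, ← RCLike.conj_mul]
  ring

theorem stmt16_general {H : Type*} [NormedAddCommGroup H] [InnerProductSpace ℂ H] [CompleteSpace H]
    (φ₁ φ₂ : H) (hφ₁ : ‖φ₁‖ = 1) (horth : ⟪φ₁, φ₂⟫_ℂ = 0)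
    (A : H →L[ℂ] H) (hA : A.IsPositive) (hA1 : (1 - A).IsPositive)
    (hsharp : ⟪φ₁, A φ₁⟫_ℂ = 0 ∨ ⟪φ₁, A φ₁⟫_ℂ = 1)
    (c₁ c₂ : ℂ) :
    ⟪c₁ • φ₁ + c₂ • φ₂, A (c₁ • φ₁ + c₂ • φ₂)⟫_ℂ
      = (‖c₁‖ ^ 2 : ℂ) * ⟪φ₁, A φ₁⟫_ℂ + (‖c₂‖ ^ 2 : ℂ) * ⟪φ₂, A φ₂⟫_ℂ := by
  have hcross : ⟪φ₂, A φ₁⟫_ℂ = 0 := by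
    rcases hsharp with h₀ | h₁
    · rw [hA.apply_eq_zero_of_inner_eq_zero h₀, inner_zero_right]
    · rw [A.apply_eq_self_of_inner_eq_one hA1 hφ₁ h₁, ← inner_conj_symm, horth, map_zero]
  exact hA.isSymmetric.inner_smul_add_smul_map_smul_add_smul hcross c₁ c₂

theorem stmt16 {H : Type*} [NormedAddCommGroup H] [InnerProductSpace ℂ H] [CompleteSpace H]
    (φ₁ φ₂ : H) (hφ₁ : ‖φ₁‖ = 1) (hφ₂ : ‖φ₂‖ = 1) (horth : ⟪φ₁, φ₂⟫_ℂ = 0)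
    (A : H →L[ℂ] H) (hA : A.IsPositive) (hA1 : (1 - A).IsPositive)
    (hsharp : ⟪φ₁, A φ₁⟫_ℂ = 0 ∨ ⟪φ₁, A φ₁⟫_ℂ = 1)
    (c₁ c₂ : ℂ) (hc : ‖c₁‖ ^ 2 + ‖c₂‖ ^ 2 = 1) :
    ⟪c₁ • φ₁ + c₂ • φ₂, A (c₁ • φ₁ + c₂ • φ₂)⟫_ℂ
      = (‖c₁‖ ^ 2 : ℂ) * ⟪φ₁, A φ₁⟫_ℂ + (‖c₂‖ ^ 2 : ℂ) * ⟪φ₂, A φ₂⟫_ℂ :=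
  stmt16_general φ₁ φ₂ hφ₁ horth A hA hA1 hsharp c₁ c₂
end

section
/- A general density operator X is a superposition of X₁ = P₁XP₁/|c₁|² and X₂ = P₂XP₂/|c₂|² in the sense of eq. (15): if P₁, P₂ are orthogonal projections with P₁ + P₂ = 1 and PᵢXPᵢ = |cᵢ|² Xᵢ with |c₁|²+|c₂|²=1, |cᵢ|² > 0, then for every observable 0 ≤ A ≤ 1 with Tr(A X₁) = 0 one has Tr(A X) = |c₂|² Tr(A X₂). -/
/-!
For positive semidefinite `A` and `B`, `Tr (A M B Mᴴ)` is the squared Frobenius norm of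
`A^{1/2} M B^{1/2}`, so it vanishes only if `A M B = 0`. Applied to `M = 1` this turns
`Tr (A X₁) = 0` into `A X₁ = 0`, hence `Tr (A P₁ X P₁) = 0`; applied to `M = P₁` it gives
`A P₁ X = 0` and, taking adjoints, `X P₁ A = 0`. These kill every block of `Tr (A X)` except
`Tr (A P₂ X P₂) = |c₂|² Tr (A X₂)`.
-/

open ComplexOrder

namespace Matrix

variable {n : Type*} [Fintype n]

open scoped MatrixOrder in
theorem PosSemidef.mul_mul_eq_zero_of_trace_eq_zero {𝕜 m : Type*} [RCLike 𝕜] [Fintype m]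
    {A : Matrix n n 𝕜} {B : Matrix m m 𝕜} (hA : A.PosSemidef) (hB : B.PosSemidef)
    (M : Matrix n m 𝕜) (h : (A * M * B * Mᴴ).trace = 0) : A * M * B = 0 := by
  classical
  obtain ⟨S, rfl⟩ := CStarAlgebra.nonneg_iff_eq_star_mul_self.mp hA.nonneg
  obtain ⟨R, rfl⟩ := CStarAlgebra.nonneg_iff_eq_star_mul_self.mp hB.nonneg
  simp only [star_eq_conjTranspose] at h ⊢
  have hK : S * M * Rᴴ = 0 := by
    rw [← trace_mul_conjTranspose_self_eq_zero_iff, ← h]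
    simp only [conjTranspose_mul, conjTranspose_conjTranspose, Matrix.mul_assoc]
    rw [trace_mul_comm Sᴴ]
    simp only [Matrix.mul_assoc]
  calc Sᴴ * S * M * (Rᴴ * R) = Sᴴ * (S * M * Rᴴ) * R := by simp only [Matrix.mul_assoc]
    _ = 0 := by rw [hK, Matrix.mul_zero, Matrix.zero_mul]

theorem PosSemidef.mul_eq_zero_of_trace_mul_eq_zero {𝕜 : Type*} [RCLike 𝕜] [DecidableEq n]
    {A B : Matrix n n 𝕜} (hA : A.PosSemidef) (hB : B.PosSemidef) (h : (A * B).trace = 0) :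
    A * B = 0 := by
  simpa using hA.mul_mul_eq_zero_of_trace_eq_zero hB 1 (by simpa using h)

theorem trace_mul_eq_trace_mul_mul_mul_of_add_eq_one {R : Type*} [CommRing R] [DecidableEq n]
    {A X P Q : Matrix n n R} (hPQ : P + Q = 1) (hAX : A * P * X = 0) (hXA : X * P * A = 0) :
    (A * X).trace = (A * (Q * X * Q)).trace := by
  obtain rfl : P = 1 - Q := eq_sub_of_add_eq hPQ
  have hAX' : A * X = A * Q * X := by
    simpa [Matrix.mul_sub, Matrix.sub_mul, sub_eq_zero] using hAX
  have hXA' : X * A = X * Q * A := by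
    simpa [Matrix.mul_sub, Matrix.sub_mul, sub_eq_zero] using hXA
  calc (A * X).trace = (A * Q * X).trace := by rw [hAX']
    _ = (X * A * Q).trace := trace_mul_cycle A Q X
    _ = (X * Q * A * Q).trace := by rw [hXA']
    _ = (A * (Q * X * Q)).trace := by
      rw [trace_mul_cycle, ← Matrix.mul_assoc, trace_mul_comm]

end Matrix

theorem stmt18_general {n : Type*} [Fintype n] [DecidableEq n]
    (X X₁ X₂ : Matrix n n ℂ) (hX : X.PosSemidef) (hX₁ : X₁.PosSemidef)
    (P₁ P₂ : Matrix n n ℂ) (hP₁h : P₁.IsHermitian)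
    (hPsum : P₁ + P₂ = 1)
    (c₁ c₂ : ℂ)
    (h₁ : P₁ * X * P₁ = (‖c₁‖ ^ 2 : ℂ) • X₁) (h₂ : P₂ * X * P₂ = (‖c₂‖ ^ 2 : ℂ) • X₂)
    (A : Matrix n n ℂ) (hA : A.PosSemidef)
    (hAX₁ : (A * X₁).trace = 0) :
    (A * X).trace = (‖c₂‖ ^ 2 : ℂ) * (A * X₂).trace := by
  have hAX₁' : A * X₁ = 0 := hA.mul_eq_zero_of_trace_mul_eq_zero hX₁ hAX₁
  have hAP₁X : A * P₁ * X = 0 := by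
    refine hA.mul_mul_eq_zero_of_trace_eq_zero hX P₁ ?_
    rw [hP₁h.eq, Matrix.mul_assoc, Matrix.mul_assoc, ← Matrix.mul_assoc P₁, h₁, Matrix.mul_smul,
      hAX₁', smul_zero, Matrix.trace_zero]
  have hXP₁A : X * P₁ * A = 0 := by
    simpa [Matrix.mul_assoc, hA.1.eq, hX.1.eq, hP₁h.eq] using congrArg Matrix.conjTranspose hAP₁X
  rw [Matrix.trace_mul_eq_trace_mul_mul_mul_of_add_eq_one hPsum hAP₁X hXP₁A, h₂, Matrix.mul_smul,
    Matrix.trace_smul, smul_eq_mul]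

/-- A general state `X` with `PᵢXPᵢ = |cᵢ|² Xᵢ` for complementary orthogonal
projections `P₁ + P₂ = 1` satisfies the probabilistic superposition condition
(eq. 15 of the paper): any observable vanishing on `X₁` sees only the `X₂`
component with weight `|c₂|²`. -/
theorem stmt18 {n : Type*} [Fintype n] [DecidableEq n]
    (X X₁ X₂ : Matrix n n ℂ) (hX : X.PosSemidef) (hX₁ : X₁.PosSemidef) (hX₂ : X₂.PosSemidef)
    (hXtr : X.trace = 1) (hX₁tr : X₁.trace = 1) (hX₂tr : X₂.trace = 1)
    (P₁ P₂ : Matrix n n ℂ) (hP₁h : P₁.IsHermitian) (hP₂h : P₂.IsHermitian)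
    (hP₁i : P₁ * P₁ = P₁) (hP₂i : P₂ * P₂ = P₂) (hPsum : P₁ + P₂ = 1)
    (c₁ c₂ : ℂ) (hc : ‖c₁‖ ^ 2 + ‖c₂‖ ^ 2 = 1)
    (hc₁ : 0 < ‖c₁‖ ^ 2) (hc₂ : 0 < ‖c₂‖ ^ 2)
    (h₁ : P₁ * X * P₁ = (‖c₁‖ ^ 2 : ℂ) • X₁) (h₂ : P₂ * X * P₂ = (‖c₂‖ ^ 2 : ℂ) • X₂)
    (A : Matrix n n ℂ) (hA : A.PosSemidef) (hA1 : (1 - A).PosSemidef)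
    (hAX₁ : (A * X₁).trace = 0) :
    (A * X).trace = (‖c₂‖ ^ 2 : ℂ) * (A * X₂).trace :=
  stmt18_general X X₁ X₂ hX hX₁ P₁ P₂ hP₁h hPsum c₁ c₂ h₁ h₂ A hA hAX₁
end
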